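/- Let g₁,…,g_m ∈ ℝ be real numbers, G ⊆ [m] a set of 'good' indices with |G| ≥ (1−α)m, and U ⊆ [m] with |U| = (1−2β)m obtained by removing the largest and smallest β fraction from {g_i}, where α ≤ β < 1/2. Suppose |g_i − μ| ≤ M for all i ∈ G. Then every element of {g_i : i ∈ U ∩ ([m]∖G)} (the untrimmed bad indices) satisfies |g_i − μ| ≤ M, hence |(1/|U|)∑_{i∈U} g_i − μ| ≤ ((1−α)/(1−2β))·E + ((2β+α)/(1−2β))·M whenever |(1/|G|)∑_{i∈G}(g_i − μ)| ≤ E. -/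
import Mathlib


open Finset

set_option maxHeartbeats 1600000 in
/-- Error bound for the trimmed mean: removing the largest and smallest `β` fraction
controls both the untrimmed bad values and the trimmed-mean deviation. -/
theorem stmt_11 (m : ℕ) (hm : 0 < m) (g : Fin m → ℝ) (μ M E α β : ℝ)
    (hα : 0 ≤ α) (hαβ : α ≤ β) (hβ : β < 1 / 2)
    (Gset U Tlo Thi : Finset (Fin m))
    (hGcard : (1 - α) * m ≤ (Gset.card : ℝ))
    (hUcard : (U.card : ℝ) = (1 - 2 * β) * m)
    (hTlocard : (Tlo.card : ℝ) = β * m)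
    (hThicard : (Thi.card : ℝ) = β * m)
    (hcover : Tlo ∪ U ∪ Thi = Finset.univ)
    (hdisj1 : Disjoint Tlo U) (hdisj2 : Disjoint U Thi) (hdisj3 : Disjoint Tlo Thi)
    (hlow : ∀ i ∈ Tlo, ∀ j ∈ U, g i ≤ g j)
    (hhigh : ∀ j ∈ U, ∀ i ∈ Thi, g j ≤ g i)
    (hgood : ∀ i ∈ Gset, |g i - μ| ≤ M)
    (hE : |(1 / (Gset.card : ℝ)) * ∑ i ∈ Gset, (g i - μ)| ≤ E) :
    (∀ i ∈ U \ Gset, |g i - μ| ≤ M) ∧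
      |(1 / (U.card : ℝ)) * ∑ i ∈ U, g i - μ|
        ≤ (1 - α) / (1 - 2 * β) * E + (2 * β + α) / (1 - 2 * β) * M := by
  have hm' : (0:ℝ) < m := by exact_mod_cast hm
  have hβ2 : (0:ℝ) < 1 - 2*β := by linarith
  have hU0 : (0:ℝ) < U.card := by rw [hUcard]; positivity
  have hα1 : (0:ℝ) < 1 - α := by linarith
  have hG0 : (0:ℝ) < Gset.card := lt_of_lt_of_le (by positivity) hGcard
  have hGne : Gset.Nonempty := Finset.card_pos.mp (by exact_mod_cast hG0)
  have hM0 : 0 ≤ M := le_trans (abs_nonneg _) (hgood _ hGne.choose_spec)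
  have hE0 : 0 ≤ E := le_trans (abs_nonneg _) hE
  have hGm : Gset.card ≤ m := by
    simpa using Finset.card_le_univ Gset
  have hGm' : (Gset.card : ℝ) ≤ m := by exact_mod_cast hGm
  have hbad : (((univ : Finset (Fin m)) \ Gset).card : ℝ) = m - Gset.card := by
    rw [Finset.card_sdiff_of_subset (Finset.subset_univ _), Finset.card_univ, Fintype.card_fin,
      Nat.cast_sub hGm]
  have hbadle : (((univ : Finset (Fin m)) \ Gset).card : ℝ) ≤ α * m := by
    rw [hbad]; linarith
  have hαβm : α * m ≤ β * m := by nlinarith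
  -- Part 1
  have key : ∀ i ∈ U \ Gset, |g i - μ| ≤ M := by
    intro i hi
    rw [Finset.mem_sdiff] at hi
    obtain ⟨hiU, hiG⟩ := hi
    have hiTlo : i ∉ Tlo := fun h => (Finset.disjoint_left.mp hdisj1 h) hiU
    have hiThi : i ∉ Thi := fun h => (Finset.disjoint_left.mp hdisj2 hiU) h
    have hlo : ∃ j, j ∈ Tlo ∩ Gset := by
      by_contra h
      push_neg at h
      have hsub : insert i Tlo ⊆ univ \ Gset := by
        intro x hx
        rcases Finset.mem_insert.mp hx with rfl | hx
        · exact Finset.mem_sdiff.mpr ⟨Finset.mem_univ _, hiG⟩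
        · exact Finset.mem_sdiff.mpr ⟨Finset.mem_univ _,
            fun hxG => h x (Finset.mem_inter.mpr ⟨hx, hxG⟩)⟩
      have hc := Finset.card_le_card hsub
      rw [Finset.card_insert_of_notMem hiTlo] at hc
      have hc' : (Tlo.card : ℝ) + 1 ≤ (((univ : Finset (Fin m)) \ Gset).card : ℝ) := by
        exact_mod_cast hc
      rw [hTlocard] at hc'
      linarith
    have hhi : ∃ k, k ∈ Thi ∩ Gset := by
      by_contra h
      push_neg at h
      have hsub : insert i Thi ⊆ univ \ Gset := by
        intro x hx
        rcases Finset.mem_insert.mp hx with rfl | hx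
        · exact Finset.mem_sdiff.mpr ⟨Finset.mem_univ _, hiG⟩
        · exact Finset.mem_sdiff.mpr ⟨Finset.mem_univ _,
            fun hxG => h x (Finset.mem_inter.mpr ⟨hx, hxG⟩)⟩
      have hc := Finset.card_le_card hsub
      rw [Finset.card_insert_of_notMem hiThi] at hc
      have hc' : (Thi.card : ℝ) + 1 ≤ (((univ : Finset (Fin m)) \ Gset).card : ℝ) := by
        exact_mod_cast hc
      rw [hThicard] at hc'
      linarith
    obtain ⟨j, hj⟩ := hlo
    obtain ⟨hjT, hjG⟩ := Finset.mem_inter.mp hj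
    obtain ⟨k, hk⟩ := hhi
    obtain ⟨hkT, hkG⟩ := Finset.mem_inter.mp hk
    have h1 := hlow j hjT i hiU
    have h2 := hhigh i hiU k hkT
    have h3 := abs_le.mp (hgood j hjG)
    have h4 := abs_le.mp (hgood k hkG)
    exact abs_le.mpr ⟨by linarith [h3.1], by linarith [h4.2]⟩
  refine ⟨key, ?_⟩
  -- Part 2
  set c : ℝ := (Gset.card : ℝ) with hc
  set B : ℝ := ((Gset \ U).card : ℝ) with hBdef
  set C : ℝ := ((U \ Gset).card : ℝ) with hCdef
  -- decomposition
  have hSdecomp : ∑ i ∈ U, (g i - μ)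
      = (∑ i ∈ Gset, (g i - μ)) - (∑ i ∈ Gset \ U, (g i - μ)) + ∑ i ∈ U \ Gset, (g i - μ) := by
    have e1 := Finset.sum_inter_add_sum_sdiff U Gset (fun i => g i - μ)
    have e2 := Finset.sum_inter_add_sum_sdiff Gset U (fun i => g i - μ)
    rw [Finset.inter_comm] at e2
    linarith
  -- bound on good sum via E
  have hA : |∑ i ∈ Gset, (g i - μ)| ≤ c * E := by
    have h := hE
    rw [abs_mul, abs_of_pos (by positivity : (0:ℝ) < 1 / c), one_div, inv_mul_eq_div,
      div_le_iff₀ hG0] at h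
    linarith [h]
  -- bound on good sum via M
  have hA2 : |∑ i ∈ Gset, (g i - μ)| ≤ c * M := by
    calc |∑ i ∈ Gset, (g i - μ)| ≤ ∑ i ∈ Gset, |g i - μ| := Finset.abs_sum_le_sum_abs _ _
      _ ≤ ∑ _i ∈ Gset, M := Finset.sum_le_sum (fun i hi => hgood i hi)
      _ = c * M := by rw [Finset.sum_const, nsmul_eq_mul]
  have hBb : |∑ i ∈ Gset \ U, (g i - μ)| ≤ B * M := by
    calc |∑ i ∈ Gset \ U, (g i - μ)| ≤ ∑ i ∈ Gset \ U, |g i - μ| :=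
        Finset.abs_sum_le_sum_abs _ _
      _ ≤ ∑ _i ∈ Gset \ U, M :=
        Finset.sum_le_sum (fun i hi => hgood i (Finset.mem_sdiff.mp hi).1)
      _ = B * M := by rw [Finset.sum_const, nsmul_eq_mul]
  have hCb : |∑ i ∈ U \ Gset, (g i - μ)| ≤ C * M := by
    calc |∑ i ∈ U \ Gset, (g i - μ)| ≤ ∑ i ∈ U \ Gset, |g i - μ| :=
        Finset.abs_sum_le_sum_abs _ _
      _ ≤ ∑ _i ∈ U \ Gset, M := Finset.sum_le_sum (fun i hi => key i hi)
      _ = C * M := by rw [Finset.sum_const, nsmul_eq_mul]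
  -- card bounds
  have hBcard : B ≤ 2 * β * m := by
    have hsub : Gset \ U ⊆ Tlo ∪ Thi := by
      intro x hx
      have hxU : x ∉ U := (Finset.mem_sdiff.mp hx).2
      have hxuniv : x ∈ Tlo ∪ U ∪ Thi := by rw [hcover]; exact Finset.mem_univ x
      simp only [Finset.mem_union] at hxuniv ⊢
      tauto
    have h1 : ((Gset \ U).card : ℝ) ≤ ((Tlo ∪ Thi).card : ℝ) := by
      exact_mod_cast Finset.card_le_card hsub
    have h2 : ((Tlo ∪ Thi).card : ℝ) = β * m + β * m := by
      rw [Finset.card_union_of_disjoint hdisj3]; push_cast; rw [hTlocard, hThicard]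
    rw [hBdef]; linarith
  have hCcard : C ≤ m - c := by
    have hsub : U \ Gset ⊆ univ \ Gset := Finset.sdiff_subset_sdiff (Finset.subset_univ _) le_rfl
    have h1 : ((U \ Gset).card : ℝ) ≤ (((univ : Finset (Fin m)) \ Gset).card : ℝ) := by
      exact_mod_cast Finset.card_le_card hsub
    rw [hCdef]; rw [hbad] at h1; exact h1
  -- total bound on |S|
  have htri : |∑ i ∈ U, (g i - μ)| ≤ |∑ i ∈ Gset, (g i - μ)| + B * M + C * M := by
    rw [hSdecomp]
    calc |(∑ i ∈ Gset, (g i - μ)) - (∑ i ∈ Gset \ U, (g i - μ)) + ∑ i ∈ U \ Gset, (g i - μ)|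
        ≤ |(∑ i ∈ Gset, (g i - μ)) - (∑ i ∈ Gset \ U, (g i - μ))| + |∑ i ∈ U \ Gset, (g i - μ)| :=
          abs_add_le _ _
      _ ≤ |∑ i ∈ Gset, (g i - μ)| + |∑ i ∈ Gset \ U, (g i - μ)| + |∑ i ∈ U \ Gset, (g i - μ)| := by
          linarith [abs_sub (∑ i ∈ Gset, (g i - μ)) (∑ i ∈ Gset \ U, (g i - μ))]
      _ ≤ |∑ i ∈ Gset, (g i - μ)| + B * M + C * M := by linarith
  have h1 : B * M ≤ 2 * β * m * M := mul_le_mul_of_nonneg_right hBcard hM0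
  have h2 : C * M ≤ (m - c) * M := mul_le_mul_of_nonneg_right hCcard hM0
  have hSbound : |∑ i ∈ U, (g i - μ)| ≤ (1 - α) * m * E + (2 * β + α) * m * M := by
    rcases le_total E M with hEM | hEM
    · have hp : 0 ≤ (c - (1 - α) * m) * (M - E) :=
        mul_nonneg (by linarith) (by linarith)
      have hp' : c * E + 2 * β * m * M + (m - c) * M
          ≤ (1 - α) * m * E + (2 * β + α) * m * M := by nlinarith [hp]
      linarith
    · have hp : 0 ≤ (1 - α) * m * (E - M) :=
        mul_nonneg (by positivity) (by linarith)
      have hp' : c * M + 2 * β * m * M + (m - c) * M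
          ≤ (1 - α) * m * E + (2 * β + α) * m * M := by nlinarith [hp]
      linarith
  -- convert goal
  have havg : (1 / (U.card : ℝ)) * ∑ i ∈ U, g i - μ
      = (1 / (U.card : ℝ)) * ∑ i ∈ U, (g i - μ) := by
    rw [Finset.sum_sub_distrib, Finset.sum_const, nsmul_eq_mul]
    field_simp
  rw [havg, abs_mul, abs_of_pos (by positivity : (0:ℝ) < 1 / (U.card : ℝ)), one_div,
    inv_mul_eq_div, div_le_iff₀ hU0, hUcard]
  have hrhs : ((1 - α) / (1 - 2 * β) * E + (2 * β + α) / (1 - 2 * β) * M) * ((1 - 2 * β) * m)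
      = (1 - α) * m * E + (2 * β + α) * m * M := by
    field_simp
  rw [hrhs]
  exact hSbound
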